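/- Assume ητ ≤ 1. Then for every t ≥ 0, QRE-gap_τ(π^(t+1)) ≤ 2τ (1−ητ)^{t+1} · max_{i∈[N]} max_{a∈𝒜} |log π_i^(0)(a) − log π_i^{⋆(0)}(a)| + 2 Σ_{s=0}^{t} (1−ητ)^{t−s} · √(J(π^(s+1), π^(s))). -/

import Mathlib

open Finset

noncomputable section

/-- A probability distribution on a finite action set. -/
def IsDist {A : Type*} [Fintype A] (p : A → ℝ) : Prop :=
  (∀ a, 0 ≤ p a) ∧ ∑ a, p a = 1

/-- Shannon entropy of a distribution. -/
def entropy {A : Type*} [Fintype A] (p : A → ℝ) : ℝ :=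
  -∑ a, p a * Real.log (p a)

/-- Kullback-Leibler divergence on a finite set. -/
def KLdiv {A : Type*} [Fintype A] (p q : A → ℝ) : ℝ :=
  ∑ a, p a * (Real.log (p a) - Real.log (q a))

/-- Jeffrey divergence: the symmetrized KL divergence. -/
def Jdiv {A : Type*} [Fintype A] (p q : A → ℝ) : ℝ :=
  KLdiv p q + KLdiv q p

/-- Joint product distribution induced by a product policy. -/
def jointPmf {N : ℕ} {A : Type*} [Fintype A] (π : Fin N → A → ℝ) :
    (Fin N → A) → ℝ :=
  fun a => ∏ i, π i (a i)

/-- Expectation of `f` under the product policy `π`. -/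
def expVal {N : ℕ} {A : Type*} [Fintype A] (π : Fin N → A → ℝ)
    (f : (Fin N → A) → ℝ) : ℝ :=
  ∑ a, jointPmf π a * f a

/-- Point mass at action `a`. -/
def pmfOf {A : Type*} [DecidableEq A] (a : A) : A → ℝ :=
  fun b => if b = a then 1 else 0

/-- Marginalized utility `r_i^π(a) = E_{a_{-i} ∼ π_{-i}}[u_i(a, a_{-i})]`. -/
def margU {N : ℕ} {A : Type*} [Fintype A] [DecidableEq A]
    (u : Fin N → (Fin N → A) → ℝ) (π : Fin N → A → ℝ) (i : Fin N) (a : A) : ℝ :=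
  expVal (Function.update π i (pmfOf a)) (u i)

/-- Entropy-regularized utility `u_{i,τ}(π) = u_i(π) + τ H(π_i)`. -/
def uReg {N : ℕ} {A : Type*} [Fintype A] (u : Fin N → (Fin N → A) → ℝ) (τ : ℝ)
    (i : Fin N) (π : Fin N → A → ℝ) : ℝ :=
  expVal π (u i) + τ * entropy (π i)

/-- `QRE-gap_τ(π)`. -/
def QREgap {N : ℕ} {A : Type*} [Fintype A] [DecidableEq A]
    (u : Fin N → (Fin N → A) → ℝ) (τ : ℝ) (π : Fin N → A → ℝ) : ℝ :=
  sSup {x | ∃ (i : Fin N) (p : A → ℝ), IsDist p ∧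
    x = uReg u τ i (Function.update π i p) - uReg u τ i π}

/-- `NE-gap(π)`. -/
def NEgap {N : ℕ} {A : Type*} [Fintype A] [DecidableEq A]
    (u : Fin N → (Fin N → A) → ℝ) (π : Fin N → A → ℝ) : ℝ :=
  sSup {x | ∃ (i : Fin N) (p : A → ℝ), IsDist p ∧
    x = expVal (Function.update π i p) (u i) - expVal π (u i)}

/-- Entropy-regularized potential `Φ_τ(π) = Φ(π) + τ ∑_i H(π_i)`. -/
def regPot {N : ℕ} {A : Type*} [Fintype A] (Φ : (Fin N → A) → ℝ) (τ : ℝ)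
    (π : Fin N → A → ℝ) : ℝ :=
  expVal π Φ + τ * ∑ i, entropy (π i)

/-- `Φ` is a potential function for the game with utilities `u`. -/
def IsPotential {N : ℕ} {A : Type*} [Fintype A] [DecidableEq A]
    (u : Fin N → (Fin N → A) → ℝ) (Φ : (Fin N → A) → ℝ) : Prop :=
  ∀ (i : Fin N) (a : Fin N → A) (a' : A),
    u i a - u i (Function.update a i a') = Φ a - Φ (Function.update a i a')

/-- The independent entropy-regularized NPG update rule. -/
def NPGstep {N : ℕ} {A : Type*} [Fintype A] [DecidableEq A]
    (u : Fin N → (Fin N → A) → ℝ) (τ η : ℝ) (π : ℕ → Fin N → A → ℝ) : Prop :=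
  ∀ t i a, π (t+1) i a =
    π t i a ^ (1 - η * τ) * Real.exp (η * margU u (π t) i a) /
      ∑ a', π t i a' ^ (1 - η * τ) * Real.exp (η * margU u (π t) i a')

/-- Best-response policy `π_i^⋆(a) ∝ exp(r_i^π(a)/τ)`. -/
def bestResp {N : ℕ} {A : Type*} [Fintype A] [DecidableEq A]
    (u : Fin N → (Fin N → A) → ℝ) (τ : ℝ) (π : Fin N → A → ℝ) (i : Fin N) :
    A → ℝ :=
  fun a => Real.exp (margU u π i a / τ) / ∑ a', Real.exp (margU u π i a' / τ)

/-!
The QRE-gap of a product policy is at most `τ · maxᵢ KL(πᵢ ‖ πᵢ^⋆)` (Gibbs variational principle),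
and `KL(p ‖ q)` is at most the spread `max_{a,a'} (D a - D a')` of `D = log p - log q`.
Along the NPG iterates, `D^(t) = log π^(t) - log π^⋆(t)` satisfies, up to an action-independent
constant, `D^(t+1) = (1 - ητ) D^(t) + (r^(t) - r^(t+1)) / τ`. Marginal utilities are 1-Lipschitz
for the ℓ¹ distance of the joint policies, and `‖P - Q‖₁ ≤ √J(P, Q)` because the logarithmic mean
is at most the arithmetic mean; so the spread contracts by `1 - ητ` up to an additive `2 √J / τ`
per step.
-/

-- With `z = (x - y) / (x + y)`, `z (log x - log y) = ∑ₖ 2 z^(2k+2) / (2k+1)`: every term is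
-- nonnegative and the first one is `2 z²`.
theorem two_mul_sq_div_le_sub_mul_log_sub_log {x y : ℝ} (hx : 0 < x) (hy : 0 < y) :
    2 * (x - y) ^ 2 / (x + y) ≤ (x - y) * (Real.log x - Real.log y) := by
  have hxy : 0 < x + y := add_pos hx hy
  set z := (x - y) / (x + y) with hz
  have hz1 : |z| < 1 := by
    rw [hz, abs_div, abs_of_pos hxy, div_lt_one hxy, abs_lt]
    constructor <;> linarith
  have hlog : Real.log (1 + z) - Real.log (1 - z) = Real.log x - Real.log y := by
    have h1 : 1 + z = 2 * x / (x + y) := by rw [hz]; field_simp; ring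
    have h2 : 1 - z = 2 * y / (x + y) := by rw [hz]; field_simp; ring
    rw [h1, h2, Real.log_div (by positivity) hxy.ne', Real.log_div (by positivity) hxy.ne',
      Real.log_mul two_ne_zero hx.ne', Real.log_mul two_ne_zero hy.ne']
    ring
  have hseries := (Real.hasSum_log_sub_log_of_abs_lt_one hz1).mul_left z
  have hterm : ∀ k : ℕ, z * (2 * (1 / (2 * k + 1)) * z ^ (2 * k + 1))
      = 2 * (1 / (2 * k + 1)) * (z ^ (k + 1)) ^ 2 := fun k => by ring
  have hfirst : 2 * z ^ 2 ≤ z * (Real.log x - Real.log y) := by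
    calc 2 * z ^ 2 = z * (2 * (1 / (2 * ((0 : ℕ) : ℝ) + 1)) * z ^ (2 * 0 + 1)) := by
          push_cast; ring
      _ ≤ z * (Real.log (1 + z) - Real.log (1 - z)) :=
          le_hasSum hseries 0 fun k _ => by rw [hterm]; positivity
      _ = z * (Real.log x - Real.log y) := by rw [hlog]
  have e1 : 2 * (x - y) ^ 2 / (x + y) = (x + y) * (2 * z ^ 2) := by rw [hz]; field_simp
  have e2 : (x - y) * (Real.log x - Real.log y) = (x + y) * (z * (Real.log x - Real.log y)) := by
    rw [hz]; field_simp
  rw [e1, e2]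
  exact mul_le_mul_of_nonneg_left hfirst hxy.le

section Divergence

variable {A : Type*} [Fintype A]

theorem IsDist.nonempty {p : A → ℝ} (hp : IsDist p) : Nonempty A := by
  by_contra h
  simpa [not_nonempty_iff.mp h] using hp.2

theorem Jdiv_eq_sum (p q : A → ℝ) :
    Jdiv p q = ∑ a, (p a - q a) * (Real.log (p a) - Real.log (q a)) := by
  rw [Jdiv, KLdiv, KLdiv, ← sum_add_distrib]
  exact sum_congr rfl fun a _ => by ring

theorem sum_abs_sub_le_sqrt_Jdiv {p q : A → ℝ} (hp : ∀ a, 0 < p a) (hq : ∀ a, 0 < q a)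
    (hp1 : ∑ a, p a = 1) (hq1 : ∑ a, q a = 1) :
    ∑ a, |p a - q a| ≤ √(Jdiv p q) := by
  apply Real.le_sqrt_of_sq_le
  have hpq : ∀ a ∈ univ, 0 < p a + q a := fun a _ => add_pos (hp a) (hq a)
  have hCS := sq_sum_div_le_sum_sq_div univ (fun a => |p a - q a|) hpq
  rw [sum_add_distrib, hp1, hq1] at hCS
  calc (∑ a, |p a - q a|) ^ 2 ≤ 2 * ∑ a, |p a - q a| ^ 2 / (p a + q a) := by linarith
    _ = ∑ a, 2 * (p a - q a) ^ 2 / (p a + q a) := by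
        rw [mul_sum]; exact sum_congr rfl fun a _ => by rw [sq_abs, mul_div_assoc]
    _ ≤ Jdiv p q := by
        rw [Jdiv_eq_sum]
        exact sum_le_sum fun a _ => two_mul_sq_div_le_sub_mul_log_sub_log (hp a) (hq a)

theorem KLdiv_nonneg {p q : A → ℝ} (hp : IsDist p) (hq : ∀ a, 0 < q a) (hq1 : ∑ a, q a = 1) :
    0 ≤ KLdiv p q := by
  have hterm : ∀ a, p a * (Real.log (q a) - Real.log (p a)) ≤ q a - p a := fun a => by
    rcases (hp.1 a).eq_or_lt with h | h
    · simp [← h, (hq a).le]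
    · have := mul_le_mul_of_nonneg_left (Real.log_le_sub_one_of_pos (div_pos (hq a) h)) h.le
      rw [Real.log_div (hq a).ne' h.ne'] at this
      exact this.trans_eq (by field_simp)
  have hsum := sum_le_sum fun a (_ : a ∈ univ) => hterm a
  rw [sum_sub_distrib, hq1, hp.2, sub_self] at hsum
  rw [KLdiv, ← neg_nonpos, ← sum_neg_distrib]
  simpa only [neg_mul_eq_mul_neg, neg_sub] using hsum

-- Averaging `KL(p ‖ q) ≤ C + (log p a' - log q a')` against `q a'` gives `C - KL(q ‖ p) ≤ C`.
theorem KLdiv_le_of_forall_sub_le {p q : A → ℝ} (hp : ∀ a, 0 < p a) (hp1 : ∑ a, p a = 1)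
    (hq : ∀ a, 0 < q a) (hq1 : ∑ a, q a = 1) {C : ℝ}
    (hC : ∀ a a', (Real.log (p a) - Real.log (q a)) - (Real.log (p a') - Real.log (q a')) ≤ C) :
    KLdiv p q ≤ C := by
  have hpoint : ∀ a', KLdiv p q ≤ C + (Real.log (p a') - Real.log (q a')) := fun a' => by
    calc KLdiv p q ≤ ∑ a, p a * (C + (Real.log (p a') - Real.log (q a'))) :=
          sum_le_sum fun a _ => mul_le_mul_of_nonneg_left (by linarith [hC a a']) (hp a).le
      _ = C + (Real.log (p a') - Real.log (q a')) := by rw [← sum_mul, hp1, one_mul]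
  have hqp := KLdiv_nonneg ⟨fun a => (hq a).le, hq1⟩ hp hp1
  calc KLdiv p q = ∑ a', q a' * KLdiv p q := by rw [← sum_mul, hq1, one_mul]
    _ ≤ ∑ a', q a' * (C + (Real.log (p a') - Real.log (q a'))) :=
        sum_le_sum fun a' _ => mul_le_mul_of_nonneg_left (hpoint a') (hq a').le
    _ = ∑ a', q a' * C - ∑ a', q a' * (Real.log (q a') - Real.log (p a')) := by
        rw [← sum_sub_distrib]; exact sum_congr rfl fun a _ => by ring
    _ = C - KLdiv q p := by rw [← sum_mul, hq1, one_mul, KLdiv]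
    _ ≤ C := by linarith

end Divergence

section ProductPolicy

variable {N : ℕ} {A : Type*} [Fintype A]

theorem jointPmf_pos {π : Fin N → A → ℝ} (hπ : ∀ i a, 0 < π i a) (w : Fin N → A) :
    0 < jointPmf π w :=
  prod_pos fun i _ => hπ i (w i)

theorem sum_jointPmf {π : Fin N → A → ℝ} (hπ : ∀ i, ∑ a, π i a = 1) :
    ∑ w, jointPmf π w = 1 := by
  simp only [jointPmf]
  rw [← Fintype.piFinset_univ, ← prod_univ_sum]
  simp [hπ]

theorem jointPmf_update_funSplitAt_symm (π : Fin N → A → ℝ) (i : Fin N) (p : A → ℝ) (b : A)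
    (x : {j // j ≠ i} → A) :
    jointPmf (Function.update π i p) ((Equiv.funSplitAt i A).symm (b, x))
      = p b * ∏ j : {j // j ≠ i}, π j (x j) := by
  rw [jointPmf, Fintype.prod_eq_mul_prod_subtype_ne _ i]
  congr 1
  · simp
  · exact prod_congr rfl fun j _ => by simp [j.2]

theorem expVal_update_eq_sum (π : Fin N → A → ℝ) (i : Fin N) (p : A → ℝ)
    (f : (Fin N → A) → ℝ) :
    expVal (Function.update π i p) f
      = ∑ b, p b * ∑ x : {j // j ≠ i} → A,
          (∏ j : {j // j ≠ i}, π j (x j)) * f ((Equiv.funSplitAt i A).symm (b, x)) := by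
  rw [expVal, ← (Equiv.funSplitAt i A).symm.sum_comp, Fintype.sum_prod_type]
  simp only [jointPmf_update_funSplitAt_symm, mul_sum, mul_assoc]

variable [DecidableEq A]

theorem margU_eq_sum (u : Fin N → (Fin N → A) → ℝ) (π : Fin N → A → ℝ) (i : Fin N) (a : A) :
    margU u π i a
      = ∑ x : {j // j ≠ i} → A,
          (∏ j : {j // j ≠ i}, π j (x j)) * u i ((Equiv.funSplitAt i A).symm (a, x)) := by
  simp [margU, expVal_update_eq_sum, pmfOf]

theorem expVal_update_eq_sum_margU (u : Fin N → (Fin N → A) → ℝ) (π : Fin N → A → ℝ)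
    (i : Fin N) (p : A → ℝ) :
    expVal (Function.update π i p) (u i) = ∑ a, p a * margU u π i a := by
  simp only [expVal_update_eq_sum, margU_eq_sum]

theorem margU_eq_expVal (u : Fin N → (Fin N → A) → ℝ) {π : Fin N → A → ℝ} {i : Fin N}
    (hπ : ∑ b, π i b = 1) (a : A) :
    margU u π i a = expVal π fun w => u i (Function.update w i a) := by
  have hupd : ∀ b x, Function.update ((Equiv.funSplitAt i A).symm (b, x)) i a
      = (Equiv.funSplitAt i A).symm (a, x) := fun b x => by
    ext j
    by_cases hj : j = i <;> simp [hj]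
  conv_rhs => rw [← Function.update_eq_self i π, expVal_update_eq_sum]
  simp only [hupd, ← margU_eq_sum, ← sum_mul, hπ, one_mul]

theorem abs_margU_sub_le (u : Fin N → (Fin N → A) → ℝ) (hu : ∀ i w, 0 ≤ u i w ∧ u i w ≤ 1)
    {π π' : Fin N → A → ℝ} {i : Fin N} (hπ : ∑ b, π i b = 1) (hπ' : ∑ b, π' i b = 1) (a : A) :
    |margU u π i a - margU u π' i a| ≤ ∑ w, |jointPmf π w - jointPmf π' w| := by
  rw [margU_eq_expVal u hπ, margU_eq_expVal u hπ', expVal, expVal, ← sum_sub_distrib]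
  refine (abs_sum_le_sum_abs _ _).trans (sum_le_sum fun w _ => ?_)
  obtain ⟨h0, h1⟩ := hu i (Function.update w i a)
  rw [← sub_mul, abs_mul, abs_of_nonneg h0]
  exact mul_le_of_le_one_right (abs_nonneg _) h1

theorem abs_margU_sub_le_sqrt_Jdiv (u : Fin N → (Fin N → A) → ℝ)
    (hu : ∀ i w, 0 ≤ u i w ∧ u i w ≤ 1) {π π' : Fin N → A → ℝ}
    (hπ : ∀ i a, 0 < π i a) (hπ1 : ∀ i, ∑ a, π i a = 1)
    (hπ' : ∀ i a, 0 < π' i a) (hπ'1 : ∀ i, ∑ a, π' i a = 1) (i : Fin N) (a : A) :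
    |margU u π i a - margU u π' i a| ≤ √(Jdiv (jointPmf π) (jointPmf π')) :=
  (abs_margU_sub_le u hu (hπ1 i) (hπ'1 i) a).trans <|
    sum_abs_sub_le_sqrt_Jdiv (jointPmf_pos hπ) (jointPmf_pos hπ') (sum_jointPmf hπ1)
      (sum_jointPmf hπ'1)

end ProductPolicy

section BestResponse

variable {N : ℕ} {A : Type*} [Fintype A] [DecidableEq A]
  (u : Fin N → (Fin N → A) → ℝ) (τ : ℝ) (π : Fin N → A → ℝ) (i : Fin N)

theorem bestResp_pos (a : A) : 0 < bestResp u τ π i a :=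
  div_pos (Real.exp_pos _) (sum_pos (fun _ _ => Real.exp_pos _) ⟨a, mem_univ a⟩)

theorem sum_bestResp [Nonempty A] : ∑ a, bestResp u τ π i a = 1 := by
  simp only [bestResp]
  rw [← sum_div, div_self (sum_pos (fun _ _ => Real.exp_pos _) univ_nonempty).ne']

theorem exists_log_bestResp_eq :
    ∃ c, ∀ a, Real.log (bestResp u τ π i a) = margU u π i a / τ + c := by
  refine ⟨-Real.log (∑ a', Real.exp (margU u π i a' / τ)), fun a => ?_⟩
  simp only [bestResp]
  rw [Real.log_div (Real.exp_ne_zero _)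
    (sum_pos (fun _ _ => Real.exp_pos _) ⟨a, mem_univ a⟩).ne', Real.log_exp, sub_eq_add_neg]

theorem exists_uReg_update_eq (hτ : τ ≠ 0) :
    ∃ C, ∀ p : A → ℝ, ∑ a, p a = 1 →
      uReg u τ i (Function.update π i p) = C - τ * KLdiv p (bestResp u τ π i) := by
  obtain ⟨c, hc⟩ := exists_log_bestResp_eq u τ π i
  refine ⟨-τ * c, fun p hp => ?_⟩
  have hC : -τ * c = ∑ a, p a * (-τ * c) := by rw [← sum_mul, hp, one_mul]
  rw [uReg, entropy, Function.update_self, expVal_update_eq_sum_margU, KLdiv, hC]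
  simp only [hc, mul_sum, ← sum_neg_distrib, ← sum_add_distrib, ← sum_sub_distrib]
  exact sum_congr rfl fun a _ => by field_simp; ring

theorem uReg_update_sub_le (hτ : 0 < τ) (hπ : ∑ a, π i a = 1) {p : A → ℝ}
    (hp : IsDist p) :
    uReg u τ i (Function.update π i p) - uReg u τ i π ≤ τ * KLdiv (π i) (bestResp u τ π i) := by
  have := hp.nonempty
  obtain ⟨C, hC⟩ := exists_uReg_update_eq u τ π i hτ.ne'
  have hπC := hC (π i) hπ
  rw [Function.update_eq_self] at hπC
  rw [hC p hp.2, hπC]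
  linarith [mul_nonneg hτ.le (KLdiv_nonneg hp (bestResp_pos u τ π i) (sum_bestResp u τ π i))]

theorem QREgap_le_of_mul_KLdiv_le (hτ : 0 < τ) (hπ : ∀ i, ∑ a, π i a = 1) {B : ℝ} (hB : 0 ≤ B)
    (hKL : ∀ i, τ * KLdiv (π i) (bestResp u τ π i) ≤ B) :
    QREgap u τ π ≤ B := by
  refine Real.sSup_le ?_ hB
  rintro x ⟨i, p, hp, rfl⟩
  exact (uReg_update_sub_le u τ π i hτ (hπ i) hp).trans (hKL i)

end BestResponse

theorem le_pow_mul_add_sum_of_le_mul_add {α : ℝ} (hα : 0 ≤ α) {e c : ℕ → ℝ}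
    (h : ∀ t, e (t + 1) ≤ α * e t + c t) (t : ℕ) :
    e t ≤ α ^ t * e 0 + ∑ s ∈ range t, α ^ (t - 1 - s) * c s := by
  induction t with
  | zero => simp
  | succ t ih =>
    have hsum : ∑ s ∈ range (t + 1), α ^ (t + 1 - 1 - s) * c s
        = α * ∑ s ∈ range t, α ^ (t - 1 - s) * c s + c t := by
      rw [sum_range_succ, mul_sum, Nat.add_sub_cancel, Nat.sub_self, pow_zero, one_mul]
      congr 1
      refine sum_congr rfl fun s hs => ?_
      rw [← mul_assoc, ← pow_succ', show t - 1 - s + 1 = t - s by grind]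
    calc e (t + 1) ≤ α * e t + c t := h t
      _ ≤ α * (α ^ t * e 0 + ∑ s ∈ range t, α ^ (t - 1 - s) * c s) + c t := by gcongr
      _ = _ := by rw [hsum, pow_succ]; ring

def bestRespLogRatio {N : ℕ} {A : Type*} [Fintype A] [DecidableEq A]
    (u : Fin N → (Fin N → A) → ℝ) (τ : ℝ) (π : Fin N → A → ℝ) (i : Fin N) (a : A) : ℝ :=
  Real.log (π i a) - Real.log (bestResp u τ π i a)

namespace NPGstep

variable {N : ℕ} {A : Type*} [Fintype A] [DecidableEq A] {u : Fin N → (Fin N → A) → ℝ}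
  {τ η : ℝ} {π : ℕ → Fin N → A → ℝ}

theorem pos_and_sum_eq_one (hstep : NPGstep u τ η π) (hdist : ∀ i, IsDist (π 0 i))
    (hpos : ∀ i a, 0 < π 0 i a) (t : ℕ) (i : Fin N) :
    (∀ a, 0 < π t i a) ∧ ∑ a, π t i a = 1 := by
  have := (hdist i).nonempty
  induction t with
  | zero => exact ⟨hpos i, (hdist i).2⟩
  | succ t ih =>
    have hw : ∀ a, 0 < π t i a ^ (1 - η * τ) * Real.exp (η * margU u (π t) i a) :=
      fun a => mul_pos (Real.rpow_pos_of_pos (ih.1 a) _) (Real.exp_pos _)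
    have hZ := sum_pos (fun a (_ : a ∈ univ) => hw a) univ_nonempty
    refine ⟨fun a => ?_, ?_⟩
    · rw [hstep t i a]; exact div_pos (hw a) hZ
    · rw [sum_congr rfl fun a _ => hstep t i a, ← sum_div, div_self hZ.ne']

theorem exists_log_succ_eq (hstep : NPGstep u τ η π) {t : ℕ} {i : Fin N}
    (hpos : ∀ a, 0 < π t i a) :
    ∃ c, ∀ a, Real.log (π (t + 1) i a)
      = (1 - η * τ) * Real.log (π t i a) + η * margU u (π t) i a + c := by
  have hw : ∀ a, 0 < π t i a ^ (1 - η * τ) * Real.exp (η * margU u (π t) i a) :=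
    fun a => mul_pos (Real.rpow_pos_of_pos (hpos a) _) (Real.exp_pos _)
  refine ⟨-Real.log (∑ a', π t i a' ^ (1 - η * τ) * Real.exp (η * margU u (π t) i a')),
    fun a => ?_⟩
  rw [hstep t i a, Real.log_div (hw a).ne' (sum_pos (fun a _ => hw a) ⟨a, mem_univ a⟩).ne',
    Real.log_mul (Real.rpow_pos_of_pos (hpos a) _).ne' (Real.exp_ne_zero _),
    Real.log_rpow (hpos a), Real.log_exp, sub_eq_add_neg]

-- Since `(1 - ητ) / τ + η = 1 / τ`, the log-ratio contracts by `1 - ητ` up to the change of the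
-- marginal utilities and an action-independent constant.
theorem bestRespLogRatio_succ_sub (hstep : NPGstep u τ η π) (hτ : τ ≠ 0) {t : ℕ} {i : Fin N}
    (hpos : ∀ a, 0 < π t i a) (a a' : A) :
    bestRespLogRatio u τ (π (t + 1)) i a - bestRespLogRatio u τ (π (t + 1)) i a'
      = (1 - η * τ) * (bestRespLogRatio u τ (π t) i a - bestRespLogRatio u τ (π t) i a')
        + ((margU u (π t) i a - margU u (π (t + 1)) i a)
          - (margU u (π t) i a' - margU u (π (t + 1)) i a')) / τ := by
  obtain ⟨c, hc⟩ := hstep.exists_log_succ_eq hpos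
  obtain ⟨c₁, hc₁⟩ := exists_log_bestResp_eq u τ (π (t + 1)) i
  obtain ⟨c₀, hc₀⟩ := exists_log_bestResp_eq u τ (π t) i
  simp only [bestRespLogRatio, hc, hc₀, hc₁]
  field_simp
  ring

theorem bestRespLogRatio_sub_le (hstep : NPGstep u τ η π) (hu : ∀ i w, 0 ≤ u i w ∧ u i w ≤ 1)
    (hτ : 0 < τ) (hητ : η * τ ≤ 1) (hdist : ∀ i, IsDist (π 0 i)) (hpos : ∀ i a, 0 < π 0 i a)
    (t : ℕ) (i : Fin N) (a a' : A) :
    bestRespLogRatio u τ (π t) i a - bestRespLogRatio u τ (π t) i a'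
      ≤ (1 - η * τ) ^ t * (bestRespLogRatio u τ (π 0) i a - bestRespLogRatio u τ (π 0) i a')
        + ∑ s ∈ range t, (1 - η * τ) ^ (t - 1 - s) *
            (2 * √(Jdiv (jointPmf (π (s + 1))) (jointPmf (π s))) / τ) := by
  have htraj := hstep.pos_and_sum_eq_one hdist hpos
  have hα : 0 ≤ 1 - η * τ := by linarith
  refine le_pow_mul_add_sum_of_le_mul_add hα
    (e := fun t => bestRespLogRatio u τ (π t) i a - bestRespLogRatio u τ (π t) i a')
    (c := fun s => 2 * √(Jdiv (jointPmf (π (s + 1))) (jointPmf (π s))) / τ) (fun s => ?_) t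
  rw [hstep.bestRespLogRatio_succ_sub hτ.ne' (htraj s i).1]
  have hr := fun b => abs_le.mp <| abs_margU_sub_le_sqrt_Jdiv u hu
    (fun j => (htraj (s + 1) j).1) (fun j => (htraj (s + 1) j).2)
    (fun j => (htraj s j).1) (fun j => (htraj s j).2) i b
  refine add_le_add_right (div_le_div_of_nonneg_right ?_ hτ.le) _
  linarith [(hr a).1, (hr a').2]

theorem KLdiv_bestResp_le (hstep : NPGstep u τ η π) (hu : ∀ i w, 0 ≤ u i w ∧ u i w ≤ 1)
    (hτ : 0 < τ) (hητ : η * τ ≤ 1) (hdist : ∀ i, IsDist (π 0 i)) (hpos : ∀ i a, 0 < π 0 i a)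
    {i : Fin N} {S : ℝ} (hS : ∀ a, |bestRespLogRatio u τ (π 0) i a| ≤ S) (t : ℕ) :
    KLdiv (π t i) (bestResp u τ (π t) i)
      ≤ (1 - η * τ) ^ t * (2 * S)
        + ∑ s ∈ range t, (1 - η * τ) ^ (t - 1 - s) *
            (2 * √(Jdiv (jointPmf (π (s + 1))) (jointPmf (π s))) / τ) := by
  have := (hdist i).nonempty
  have htraj := hstep.pos_and_sum_eq_one hdist hpos t i
  refine KLdiv_le_of_forall_sub_le htraj.1 htraj.2 (bestResp_pos u τ _ i) (sum_bestResp u τ _ i)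
    fun a a' => (hstep.bestRespLogRatio_sub_le hu hτ hητ hdist hpos t i a a').trans ?_
  have h0 : bestRespLogRatio u τ (π 0) i a - bestRespLogRatio u τ (π 0) i a' ≤ 2 * S := by
    linarith [(abs_le.mp (hS a)).2, (abs_le.mp (hS a')).1]
  have hα : 0 ≤ 1 - η * τ := by linarith
  gcongr

end NPGstep

theorem QREgap_iterate_bound_general
    {N : ℕ} {A : Type*} [Fintype A] [DecidableEq A]
    (u : Fin N → (Fin N → A) → ℝ) (hu : ∀ i a, 0 ≤ u i a ∧ u i a ≤ 1)
    (τ η : ℝ) (hτ : 0 < τ) (hητ : η * τ ≤ 1)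
    (π : ℕ → Fin N → A → ℝ)
    (hdist : ∀ i, IsDist (π 0 i)) (hpos : ∀ i a, 0 < π 0 i a)
    (hstep : NPGstep u τ η π) :
    ∀ t : ℕ,
      QREgap u τ (π (t + 1)) ≤
        2 * τ * (1 - η * τ) ^ (t + 1) *
            (⨆ i : Fin N, ⨆ a : A,
              |Real.log (π 0 i a) - Real.log (bestResp u τ (π 0) i a)|) +
          2 * ∑ s ∈ Finset.range (t + 1), (1 - η * τ) ^ (t - s) *
            Real.sqrt (Jdiv (jointPmf (π (s + 1))) (jointPmf (π s))) := by
  intro t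
  change _ ≤ 2 * τ * _ * (⨆ i : Fin N, ⨆ a : A, |bestRespLogRatio u τ (π 0) i a|) + _
  set S := ⨆ i : Fin N, ⨆ a : A, |bestRespLogRatio u τ (π 0) i a|
  have hS : ∀ i a, |bestRespLogRatio u τ (π 0) i a| ≤ S := fun i a =>
    (le_ciSup (Finite.bddAbove_range _) a).trans
      (le_ciSup (Finite.bddAbove_range fun i => ⨆ a, |bestRespLogRatio u τ (π 0) i a|) i)
  have hS0 : 0 ≤ S := Real.iSup_nonneg fun i => Real.iSup_nonneg fun a => abs_nonneg _
  have hα : 0 ≤ 1 - η * τ := by linarith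
  refine QREgap_le_of_mul_KLdiv_le u τ (π (t + 1)) hτ
    (fun i => (hstep.pos_and_sum_eq_one hdist hpos (t + 1) i).2)
    (add_nonneg (by positivity) (mul_nonneg zero_le_two (sum_nonneg fun s _ => by positivity)))
    fun i => ?_
  have hKL := hstep.KLdiv_bestResp_le hu hτ hητ hdist hpos (hS i) (t + 1)
  rw [Nat.add_sub_cancel] at hKL
  calc τ * KLdiv (π (t + 1) i) (bestResp u τ (π (t + 1)) i)
      ≤ τ * ((1 - η * τ) ^ (t + 1) * (2 * S) + ∑ s ∈ range (t + 1), (1 - η * τ) ^ (t - s) *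
          (2 * √(Jdiv (jointPmf (π (s + 1))) (jointPmf (π s))) / τ)) := by gcongr
    _ = _ := by
      rw [mul_add, mul_sum, mul_sum]
      congr 1
      · ring
      · exact sum_congr rfl fun s _ => by field_simp

/-- Per-iterate bound on the QRE-gap along the NPG trajectory. -/
theorem QREgap_iterate_bound
    {N : ℕ} (hN : 0 < N) {A : Type*} [Fintype A] [DecidableEq A] [Nonempty A]
    (u : Fin N → (Fin N → A) → ℝ) (hu : ∀ i a, 0 ≤ u i a ∧ u i a ≤ 1)
    (τ η : ℝ) (hτ : 0 < τ) (hη : 0 < η) (hητ : η * τ ≤ 1)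
    (π : ℕ → Fin N → A → ℝ)
    (hdist : ∀ i, IsDist (π 0 i)) (hpos : ∀ i a, 0 < π 0 i a)
    (hstep : NPGstep u τ η π) :
    ∀ t : ℕ,
      QREgap u τ (π (t + 1)) ≤
        2 * τ * (1 - η * τ) ^ (t + 1) *
            (⨆ i : Fin N, ⨆ a : A,
              |Real.log (π 0 i a) - Real.log (bestResp u τ (π 0) i a)|) +
          2 * ∑ s ∈ Finset.range (t + 1), (1 - η * τ) ^ (t - s) *
            Real.sqrt (Jdiv (jointPmf (π (s + 1))) (jointPmf (π s))) :=
  QREgap_iterate_bound_general u hu τ η hτ hητ π hdist hpos hstep
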